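/- arXiv:2412.01060 — 5 statements merged into one kernel-verified Lean document; each statement's English description precedes it below -/
import Mathlib

section
/- If (F^0, F^1, s^0, s^1) and (G^0, G^1, t^0, t^1) are matrix factorizations of f and g respectively over Q, then (F^0 ⊗ G^0 ⊕ F^1 ⊗ G^1, F^1 ⊗ G^0 ⊕ F^0 ⊗ G^1, with the standard tensor product differentials) is a matrix factorization of f + g. -/
/-!
Tensoring with an identity map preserves `s¹ ∘ s⁰ = f • 1`, and the maps `s ⊗ 1` and `1 ⊗ t`
commute. Hence in the block products `u¹ u⁰` and `u⁰ u¹` the diagonal entries are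
`(f + g) • 1`, while the two summands of each off-diagonal entry cancel by the signs.
-/

open TensorProduct

namespace LinearMap

variable {R : Type*} [CommSemiring R] {M N P : Type*}
  [AddCommMonoid M] [Module R M] [AddCommMonoid N] [Module R N] [AddCommMonoid P] [Module R P]

theorem rTensor_comp_rTensor_eq_smul_id {r : R} {a : N →ₗ[R] P} {b : P →ₗ[R] N}
    (h : b ∘ₗ a = r • LinearMap.id) : rTensor M b ∘ₗ rTensor M a = r • LinearMap.id := by
  rw [← rTensor_comp, h, rTensor_smul, rTensor_id]

theorem lTensor_comp_lTensor_eq_smul_id {r : R} {a : N →ₗ[R] P} {b : P →ₗ[R] N}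
    (h : b ∘ₗ a = r • LinearMap.id) : lTensor M b ∘ₗ lTensor M a = r • LinearMap.id := by
  rw [← lTensor_comp, h, lTensor_smul, lTensor_id]

variable {A B C D : Type*} [AddCommMonoid A] [Module R A] [AddCommMonoid B] [Module R B]
  [AddCommMonoid C] [Module R C] [AddCommMonoid D] [Module R D]

/-- `(coprod a b).prod (coprod c d)` is the block matrix `[a, b; c, d]`. -/
theorem prod_coprod_comp_prod_coprod_eq_smul_id {r : R}
    {a : A →ₗ[R] C} {b : B →ₗ[R] C} {c : A →ₗ[R] D} {d : B →ₗ[R] D}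
    {a' : C →ₗ[R] A} {b' : D →ₗ[R] A} {c' : C →ₗ[R] B} {d' : D →ₗ[R] B}
    (h11 : a' ∘ₗ a + b' ∘ₗ c = r • LinearMap.id) (h12 : a' ∘ₗ b + b' ∘ₗ d = 0)
    (h21 : c' ∘ₗ a + d' ∘ₗ c = 0) (h22 : c' ∘ₗ b + d' ∘ₗ d = r • LinearMap.id) :
    (coprod a' b').prod (coprod c' d') ∘ₗ (coprod a b).prod (coprod c d) = r • LinearMap.id := by
  ext x
  · simpa using congr($h11 x)
  · simpa using congr($h21 x)
  · simpa using congr($h12 x)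
  · simpa using congr($h22 x)

end LinearMap

theorem tensorProduct_matrixFactorization_general
    (Q : Type*) [CommRing Q] (f g : Q)
    (F0 F1 G0 G1 : Type*)
    [AddCommGroup F0] [Module Q F0]
    [AddCommGroup F1] [Module Q F1]
    [AddCommGroup G0] [Module Q G0]
    [AddCommGroup G1] [Module Q G1]
    (s0 : F0 →ₗ[Q] F1) (s1 : F1 →ₗ[Q] F0)
    (t0 : G0 →ₗ[Q] G1) (t1 : G1 →ₗ[Q] G0)
    (hs10 : s1 ∘ₗ s0 = f • (LinearMap.id : F0 →ₗ[Q] F0))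
    (hs01 : s0 ∘ₗ s1 = f • (LinearMap.id : F1 →ₗ[Q] F1))
    (ht10 : t1 ∘ₗ t0 = g • (LinearMap.id : G0 →ₗ[Q] G0))
    (ht01 : t0 ∘ₗ t1 = g • (LinearMap.id : G1 →ₗ[Q] G1)) :
    -- `u0 = [s0 ⊗ 1, -1 ⊗ t1; 1 ⊗ t0, s1 ⊗ 1] : H⁰ = (F⁰⊗G⁰) ⊕ (F¹⊗G¹) → H¹ = (F¹⊗G⁰) ⊕ (F⁰⊗G¹)`
    let u0 : (F0 ⊗[Q] G0) × (F1 ⊗[Q] G1) →ₗ[Q] (F1 ⊗[Q] G0) × (F0 ⊗[Q] G1) :=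
      LinearMap.prod
        (LinearMap.coprod (LinearMap.rTensor G0 s0) (-(LinearMap.lTensor F1 t1)))
        (LinearMap.coprod (LinearMap.lTensor F0 t0) (LinearMap.rTensor G1 s1))
    -- `u1 = [s1 ⊗ 1, 1 ⊗ t1; -1 ⊗ t0, s0 ⊗ 1] : H¹ → H⁰`
    let u1 : (F1 ⊗[Q] G0) × (F0 ⊗[Q] G1) →ₗ[Q] (F0 ⊗[Q] G0) × (F1 ⊗[Q] G1) :=
      LinearMap.prod
        (LinearMap.coprod (LinearMap.rTensor G0 s1) (LinearMap.lTensor F0 t1))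
        (LinearMap.coprod (-(LinearMap.lTensor F1 t0)) (LinearMap.rTensor G1 s0))
    u1 ∘ₗ u0 = (f + g) • LinearMap.id ∧ u0 ∘ₗ u1 = (f + g) • LinearMap.id := by
  open LinearMap in
  constructor
  · refine prod_coprod_comp_prod_coprod_eq_smul_id ?_ ?_ ?_ ?_
    · rw [rTensor_comp_rTensor_eq_smul_id hs10, lTensor_comp_lTensor_eq_smul_id ht10, add_smul]
    · rw [comp_neg, rTensor_comp_lTensor, lTensor_comp_rTensor, neg_add_cancel]
    · rw [neg_comp, lTensor_comp_rTensor, rTensor_comp_lTensor, neg_add_cancel]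
    · rw [neg_comp, comp_neg, neg_neg, lTensor_comp_lTensor_eq_smul_id ht01,
        rTensor_comp_rTensor_eq_smul_id hs01, add_smul, add_comm]
  · refine prod_coprod_comp_prod_coprod_eq_smul_id ?_ ?_ ?_ ?_
    · rw [rTensor_comp_rTensor_eq_smul_id hs01, neg_comp, comp_neg, neg_neg,
        lTensor_comp_lTensor_eq_smul_id ht10, add_smul]
    · rw [rTensor_comp_lTensor, neg_comp, lTensor_comp_rTensor, add_neg_cancel]
    · rw [lTensor_comp_rTensor, comp_neg, rTensor_comp_lTensor, add_neg_cancel]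
    · rw [lTensor_comp_lTensor_eq_smul_id ht01, rTensor_comp_rTensor_eq_smul_id hs10,
        add_smul, add_comm]

/-- The tensor product of a matrix factorization of `f` and a matrix factorization of `g`
(with the standard signs) is a matrix factorization of `f + g`. -/
theorem tensorProduct_matrixFactorization
    (Q : Type*) [CommRing Q] (f g : Q)
    (F0 F1 G0 G1 : Type*)
    [AddCommGroup F0] [Module Q F0] [Module.Free Q F0] [Module.Finite Q F0]
    [AddCommGroup F1] [Module Q F1] [Module.Free Q F1] [Module.Finite Q F1]
    [AddCommGroup G0] [Module Q G0] [Module.Free Q G0] [Module.Finite Q G0]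
    [AddCommGroup G1] [Module Q G1] [Module.Free Q G1] [Module.Finite Q G1]
    (s0 : F0 →ₗ[Q] F1) (s1 : F1 →ₗ[Q] F0)
    (t0 : G0 →ₗ[Q] G1) (t1 : G1 →ₗ[Q] G0)
    (hs10 : s1 ∘ₗ s0 = f • (LinearMap.id : F0 →ₗ[Q] F0))
    (hs01 : s0 ∘ₗ s1 = f • (LinearMap.id : F1 →ₗ[Q] F1))
    (ht10 : t1 ∘ₗ t0 = g • (LinearMap.id : G0 →ₗ[Q] G0))
    (ht01 : t0 ∘ₗ t1 = g • (LinearMap.id : G1 →ₗ[Q] G1)) :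
    -- `u0 = [s0 ⊗ 1, -1 ⊗ t1; 1 ⊗ t0, s1 ⊗ 1] : H⁰ = (F⁰⊗G⁰) ⊕ (F¹⊗G¹) → H¹ = (F¹⊗G⁰) ⊕ (F⁰⊗G¹)`
    let u0 : (F0 ⊗[Q] G0) × (F1 ⊗[Q] G1) →ₗ[Q] (F1 ⊗[Q] G0) × (F0 ⊗[Q] G1) :=
      LinearMap.prod
        (LinearMap.coprod (LinearMap.rTensor G0 s0) (-(LinearMap.lTensor F1 t1)))
        (LinearMap.coprod (LinearMap.lTensor F0 t0) (LinearMap.rTensor G1 s1))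
    -- `u1 = [s1 ⊗ 1, 1 ⊗ t1; -1 ⊗ t0, s0 ⊗ 1] : H¹ → H⁰`
    let u1 : (F1 ⊗[Q] G0) × (F0 ⊗[Q] G1) →ₗ[Q] (F0 ⊗[Q] G0) × (F1 ⊗[Q] G1) :=
      LinearMap.prod
        (LinearMap.coprod (LinearMap.rTensor G0 s1) (LinearMap.lTensor F0 t1))
        (LinearMap.coprod (-(LinearMap.lTensor F1 t0)) (LinearMap.rTensor G1 s0))
    u1 ∘ₗ u0 = (f + g) • LinearMap.id ∧ u0 ∘ₗ u1 = (f + g) • LinearMap.id :=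
  tensorProduct_matrixFactorization_general Q f g F0 F1 G0 G1 s0 s1 t0 t1 hs10 hs01 ht10 ht01
end

section
/- Let X = V(f) ⊂ P^n be a hyperplane (d = 1) with n ≥ 2. Then for each j with 1−n ≤ j ≤ 0, the invariant ρ(O_X(j)) = Σ_{r=0}^n Σ_i h^i(P^n, i_*O_X(j) ⊗ Ω^r_{P^n}(r)) equals 2, which is strictly less than 2^{⌊n/2⌋+1}. -/
/-- `IsBottCohomology n h` says that `h q p ℓ` is the dimension of the sheaf cohomology
`H^q(ℙⁿ_k, Ω^p_{ℙⁿ}(ℓ))` of the twisted sheaves of differential `p`-forms on projective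
`n`-space, as given by the Bott formula (which characterizes these dimensions):
`h^q(Ωᵖ(ℓ)) = C(ℓ+n−p, ℓ)·C(ℓ−1, p)` if `q = 0, ℓ > p`; `1` if `ℓ = 0, q = p`;
`C(p−ℓ, −ℓ)·C(−ℓ−1, n−p)` if `q = n, ℓ < p − n`; and `0` otherwise. -/
def IsBottCohomology (n : ℕ) (h : ℕ → ℕ → ℤ → ℕ) : Prop :=
  ∀ q p : ℕ, p ≤ n → ∀ ℓ : ℤ,
    h q p ℓ =
      if q = 0 ∧ (p : ℤ) < ℓ then
        Nat.choose (ℓ + n - p).toNat ℓ.toNat * Nat.choose (ℓ - 1).toNat p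
      else if ℓ = 0 ∧ q = p then 1
      else if q = n ∧ ℓ < (p : ℤ) - n then
        Nat.choose ((p : ℤ) - ℓ).toNat (-ℓ).toNat * Nat.choose (-ℓ - 1).toNat (n - p)
      else 0

/-- The long exact cohomology sequence, at the level of dimensions: a sequence of
finite-dimensional spaces `0 → D 0 → D 1 → D 2 → ⋯` is exact iff there are ranks
`rk j` (of the maps) with `rk 0 = 0` and `dim (D j) = rk j + rk (j+1)` for all `j`. -/
def ExactDims (D : ℕ → ℕ) : Prop :=
  ∃ rk : ℕ → ℕ, rk 0 = 0 ∧ ∀ j, D j = rk j + rk (j + 1)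

/-!
For `1 - n ≤ j ≤ 0` both twists `r - 1 + j` and `r + j` lie in the window `r - n ≤ ℓ ≤ r`, where
the Bott formula leaves only `h^r(Ω^r) = 1`. As `r - 1 + j` and `r + j` are never both `0`, at most
one of the first two terms of each long exact sequence is nonzero, and exactness then gives
`h^q(i_*O_X(j) ⊗ Ω^r(r)) = h^q(Ω^r(r + j)) + h^{q+1}(Ω^r(r - 1 + j))`. So only `r = -j` and
`r = 1 - j` contribute, each with a single `1` in degree `q = -j`.
-/

def interleave3 (a b c : ℕ → ℕ) (m : ℕ) : ℕ :=
  if m % 3 = 0 then a (m / 3) else if m % 3 = 1 then b (m / 3) else c (m / 3)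

section interleave3

variable {a b c : ℕ → ℕ}

@[simp] theorem interleave3_three_mul (q : ℕ) : interleave3 a b c (3 * q) = a q := by
  simp [interleave3]

@[simp] theorem interleave3_three_mul_add_one (q : ℕ) : interleave3 a b c (3 * q + 1) = b q := by
  simp [interleave3, Nat.add_mod, Nat.add_div]

@[simp] theorem interleave3_three_mul_add_two (q : ℕ) : interleave3 a b c (3 * q + 2) = c q := by
  simp [interleave3, Nat.add_mod, Nat.add_div]

end interleave3

theorem ExactDims.eq_of_eq_zero_of_eq_zero {D : ℕ → ℕ} (hD : ExactDims D) {m : ℕ}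
    (h₀ : D m = 0) (h₃ : D (m + 3) = 0) : D (m + 1) = D (m + 2) := by
  obtain ⟨rk, -, hrk⟩ := hD
  have e₀ : D m = rk m + rk (m + 1) := hrk m
  have e₁ : D (m + 1) = rk (m + 1) + rk (m + 2) := hrk (m + 1)
  have e₂ : D (m + 2) = rk (m + 2) + rk (m + 3) := hrk (m + 2)
  have e₃ : D (m + 3) = rk (m + 3) + rk (m + 4) := hrk (m + 3)
  omega

namespace ExactDims

variable {a b c : ℕ → ℕ}

theorem interleave3_eq_of_forall_eq_zero_left (hD : ExactDims (interleave3 a b c))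
    (ha : ∀ q, a q = 0) (q : ℕ) : c q = b q := by
  have := hD.eq_of_eq_zero_of_eq_zero (m := 3 * q) (by simp [ha]) (by
    rw [show 3 * q + 3 = 3 * (q + 1) by ring]; simp [ha])
  simpa using this.symm

theorem interleave3_eq_of_forall_eq_zero_middle (hD : ExactDims (interleave3 a b c))
    (hb : ∀ q, b q = 0) (q : ℕ) : c q = a (q + 1) := by
  have := hD.eq_of_eq_zero_of_eq_zero (m := 3 * q + 1) (by simp [hb]) (by
    rw [show 3 * q + 1 + 3 = 3 * (q + 1) + 1 by ring]; simp [hb])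
  rw [show 3 * q + 1 + 1 = 3 * q + 2 by ring, show 3 * q + 1 + 2 = 3 * (q + 1) by ring] at this
  simpa using this

end ExactDims

theorem IsBottCohomology.eq_ite_of_le_of_le {n : ℕ} {h : ℕ → ℕ → ℤ → ℕ}
    (hB : IsBottCohomology n h) (q : ℕ) {p : ℕ} (hp : p ≤ n) {ℓ : ℤ}
    (hℓn : (p : ℤ) - n ≤ ℓ) (hℓp : ℓ ≤ p) : h q p ℓ = if ℓ = 0 ∧ q = p then 1 else 0 := by
  rw [hB q p hp]
  split_ifs <;> omega

theorem hyperplane_cohomology_eq {n : ℕ} {h : ℕ → ℕ → ℤ → ℕ} (hBott : IsBottCohomology n h)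
    {k r : ℕ} (hk : k < n) (hr : r ≤ n) {c : ℕ → ℕ}
    (hLES : ExactDims (interleave3 (fun q => h q r ((r : ℤ) - 1 + -k))
      (fun q => h q r ((r : ℤ) + -k)) c)) (q : ℕ) :
    c q = (if r = k ∧ q = k then 1 else 0) + (if r = k + 1 ∧ q = k then 1 else 0) := by
  have hBott₀ (q) := hBott.eq_ite_of_le_of_le q hr (ℓ := (r : ℤ) - 1 + -k) (by omega) (by omega)
  have hBott₁ (q) := hBott.eq_ite_of_le_of_le q hr (ℓ := (r : ℤ) + -k) (by omega) (by omega)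
  by_cases hrk : r = k + 1
  · have hb (q) : h q r ((r : ℤ) + -k) = 0 := by rw [hBott₁, if_neg (by omega)]
    rw [hLES.interleave3_eq_of_forall_eq_zero_middle hb, hBott₀]
    split_ifs <;> omega
  · have ha (q) : h q r ((r : ℤ) - 1 + -k) = 0 := by rw [hBott₀, if_neg (by omega)]
    rw [hLES.interleave3_eq_of_forall_eq_zero_left ha, hBott₁]
    split_ifs <;> omega

/-- Let `X = V(f) ⊂ ℙⁿ` be a hyperplane (`d = 1`) with `n ≥ 2`, and let
`hX j q r = h^q(ℙⁿ, i_*O_X(j) ⊗ Ω^r_{ℙⁿ}(r))`.  Given the Bott formula for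
`h q p ℓ = h^q(ℙⁿ, Ωᵖ(ℓ))` and the long exact cohomology sequences induced by
`0 → Ω^r(r−1+j) → Ω^r(r+j) → i_*O_X(j) ⊗ Ω^r(r) → 0`, for every `1−n ≤ j ≤ 0` one has
`ρ(O_X(j)) = ∑_{r=0}^n ∑_q hX j q r = 2 < 2^{⌊n/2⌋+1}`. -/
theorem rho_line_bundles_on_hyperplane (n : ℕ) (hn : 2 ≤ n)
    (h : ℕ → ℕ → ℤ → ℕ) (hBott : IsBottCohomology n h)
    (hX : ℤ → ℕ → ℕ → ℕ)
    (hLES : ∀ j : ℤ, ∀ r ≤ n, ExactDims fun m =>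
      if m % 3 = 0 then h (m / 3) r ((r : ℤ) - 1 + j)
      else if m % 3 = 1 then h (m / 3) r ((r : ℤ) + j)
      else hX j (m / 3) r)
    (j : ℤ) (hj0 : 1 - (n : ℤ) ≤ j) (hj1 : j ≤ 0) :
    ∑ r ∈ Finset.range (n + 1), ∑ q ∈ Finset.range (n + 1), hX j q r = 2 ∧
    2 < 2 ^ (n / 2 + 1) := by
  obtain ⟨k, rfl⟩ : ∃ k : ℕ, j = -k := ⟨(-j).toNat, by omega⟩
  have hk : k < n := by omega
  refine ⟨?_, lt_of_lt_of_le (by norm_num) (Nat.pow_le_pow_right two_pos (by omega) : 2 ^ 2 ≤ _)⟩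
  rw [Finset.sum_congr rfl fun r hr => Finset.sum_congr rfl fun q _ =>
    hyperplane_cohomology_eq hBott hk (Finset.mem_range_succ_iff.mp hr)
      (c := fun q => hX (-k) q r) (hLES (-k) r (Finset.mem_range_succ_iff.mp hr)) q]
  simp [Finset.sum_add_distrib, ite_and, hk, hk.le]
end

section
/- Let X = V(f) ⊂ P^2 be a smooth conic (n = d = 2). Then ρ(O_X) = Σ_{r=0}^2 Σ_i h^i(P^2, i_*O_X ⊗ Ω^r_{P^2}(r)) = 2, which is strictly less than 2^{⌊2/2⌋+1} = 4. -/
/-!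
On `ℙ²` the twisted sheaves `Ωʳ(r−2)` and `Ωʳ(r)` for `r = 0, 1, 2` are `O(−2), O, Ω¹(−1), Ω¹(1),
Ω²(0) = O(−3), Ω²(2) = O(−1)`, and by Bott's formula the only nonzero cohomology among them is
`h⁰(O) = 1` and `h²(Ω²) = 1`. The long exact sequence of `0 → Ωʳ(r−2) → Ωʳ(r) → i_*O_X ⊗ Ωʳ(r) → 0`
therefore splits at vanishing terms into short stretches whose Euler characteristics vanish, which
leaves exactly `h⁰(i_*O_X) = 1` and `h¹(i_*O_X ⊗ Ω²(2)) = 1`.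
-/

open Finset

theorem ExactDims.alternating_sum_eq_zero {D : ℕ → ℕ} (hD : ExactDims D) {a n : ℕ}
    (ha : D a = 0) (hn : D (a + n) = 0) :
    ∑ j ∈ range (n + 1), (-1 : ℤ) ^ j * D (a + j) = 0 := by
  obtain ⟨rk, -, hrk⟩ := hD
  have telescope : ∑ j ∈ range (n + 1), (-1 : ℤ) ^ j * D (a + j) =
      rk a - (-1) ^ (n + 1) * rk (a + n + 1) := by
    convert sum_range_sub (fun j => -(-1 : ℤ) ^ j * rk (a + j)) (n + 1) using 1
    · refine sum_congr rfl fun j _ => ?_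
      rw [hrk, ← add_assoc]; push_cast; ring
    · simp only [add_zero, pow_zero, ← add_assoc]; ring
  have left : rk a = 0 := by have := hrk a; omega
  have right : rk (a + n + 1) = 0 := by have := hrk (a + n); omega
  rw [telescope, left, right]; simp

namespace IsBottCohomology

variable {n : ℕ} {h : ℕ → ℕ → ℤ → ℕ} {p q : ℕ}

theorem apply_eq_zero (hB : IsBottCohomology n h) (hp : p ≤ n) {ℓ : ℤ} (hℓ : ℓ ≠ 0)
    (hℓ' : ℓ ∈ Set.Icc ((p : ℤ) - n) p) : h q p ℓ = 0 := by
  obtain ⟨h₁, h₂⟩ := hℓ'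
  rw [hB q p hp ℓ]
  simp only [hℓ, false_and, if_false]
  split_ifs <;> omega

theorem apply_zero (hB : IsBottCohomology n h) (hp : p ≤ n) :
    h q p 0 = if q = p then 1 else 0 := by
  rw [hB q p hp 0]
  split_ifs <;> omega

end IsBottCohomology

/-- Let `X = V(f) ⊂ ℙ²` be a smooth conic (`n = d = 2`), and let
`hX q r = h^q(ℙ², i_*O_X ⊗ Ω^r_{ℙ²}(r))`.  Given the Bott formula for
`h q p ℓ = h^q(ℙ², Ωᵖ(ℓ))` and the long exact cohomology sequences induced by
`0 → Ω^r(r−2) → Ω^r(r) → i_*O_X ⊗ Ω^r(r) → 0`, one has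
`ρ(O_X) = ∑_{r=0}^2 ∑_q hX q r = 2 < 2^{⌊2/2⌋+1} = 4`. -/
theorem rho_structure_sheaf_conic
    (h : ℕ → ℕ → ℤ → ℕ) (hBott : IsBottCohomology 2 h)
    (hX : ℕ → ℕ → ℕ)
    (hLES : ∀ r ≤ 2, ExactDims fun m =>
      if m % 3 = 0 then h (m / 3) r ((r : ℤ) - 2)
      else if m % 3 = 1 then h (m / 3) r (r : ℤ)
      else hX (m / 3) r) :
    ∑ r ∈ Finset.range 3, ∑ q ∈ Finset.range 3, hX q r = 2 ∧
    (2 : ℕ) < 2 ^ (2 / 2 + 1) := by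
  refine ⟨?_, by norm_num⟩
  have hO_neg_two (q) : h q 0 (-2) = 0 :=
    hBott.apply_eq_zero (by norm_num) (by norm_num) (by norm_num)
  have hO (q) : h q 0 0 = if q = 0 then 1 else 0 := hBott.apply_zero (by norm_num)
  have hΩ_neg_one (q) : h q 1 (-1) = 0 :=
    hBott.apply_eq_zero (by norm_num) (by norm_num) (by norm_num)
  have hΩ_one (q) : h q 1 1 = 0 := hBott.apply_eq_zero (by norm_num) (by norm_num) (by norm_num)
  have hΩ₂ (q) : h q 2 0 = if q = 2 then 1 else 0 := hBott.apply_zero (by norm_num)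
  have hΩ₂_two (q) : h q 2 2 = 0 := hBott.apply_eq_zero (by norm_num) (by norm_num) (by norm_num)
  -- Index `3q + i` of the sequence is `H^q` of the `i`-th sheaf; each window `[a, a + n]` below
  -- is chosen with both end terms vanishing.
  have euler (r) (hr : r ≤ 2) (a n : ℕ) := (hLES r hr).alternating_sum_eq_zero (a := a) (n := n)
  have r₀ : hX 0 0 = 1 ∧ hX 1 0 = 0 ∧ hX 2 0 = 0 := by
    have e₀ := euler 0 (by norm_num) 0 3
    have e₁ := euler 0 (by norm_num) 4 2
    have e₂ := euler 0 (by norm_num) 7 2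
    norm_num [sum_range_succ, hO_neg_two, hO] at e₀ e₁ e₂
    omega
  have r₁ : hX 0 1 = 0 ∧ hX 1 1 = 0 ∧ hX 2 1 = 0 := by
    have e₀ := euler 1 (by norm_num) 1 2
    have e₁ := euler 1 (by norm_num) 4 2
    have e₂ := euler 1 (by norm_num) 7 2
    norm_num [sum_range_succ, hΩ_neg_one, hΩ_one] at e₀ e₁ e₂
    omega
  have r₂ : hX 0 2 = 0 ∧ hX 1 2 = 1 ∧ hX 2 2 = 0 := by
    have e₀ := euler 2 le_rfl 1 2
    have e₁ := euler 2 le_rfl 4 3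
    have e₂ := euler 2 le_rfl 7 2
    norm_num [sum_range_succ, hΩ₂, hΩ₂_two] at e₀ e₁ e₂
    omega
  simp [sum_range_succ, r₀, r₁, r₂]
end

section
/- Let S = k[x_0,…,x_n] be a graded polynomial ring, f homogeneous of degree d, R = S/(f), and M = coker(s^0) for a reduced graded matrix factorization (F^0, F^1, s^0, s^1) of f (reduced means s^0 ⊗ k = 0 = s^1 ⊗ k). Then the minimal graded free resolution of M over R is 2-periodic up to twist: ⋯ → F^0(−d)⊗R → F^1(−d)⊗R → F^0⊗R → F^1⊗R → M → 0, with differentials alternately induced by s^0 and s^1. -/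
/-!
Write `T⁰ = f F⁰`, `T¹ = f F¹`. Since `s⁰ s¹ = f`, `T¹ ⊆ im s⁰`, which gives exactness of
`F⁰ ⧸ T⁰ → F¹ ⧸ T¹ → M → 0`. If `s⁰ x ∈ T¹`, say `s⁰ x = f y`, then
`f x = s¹ s⁰ x = f s¹ y`, and `f` is a nonzerodivisor on the free module `F⁰`, so `x = s¹ y`;
conversely `s⁰ (s¹ w + f u) ∈ T¹`. This is exactness of `F¹ ⧸ T¹ → F⁰ ⧸ T⁰ → F¹ ⧸ T¹`.
The same argument with the roles of `s⁰` and `s¹` exchanged gives exactness of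
`F⁰ ⧸ T⁰ → F¹ ⧸ T¹ → F⁰ ⧸ T⁰`.
Minimality holds because reduction modulo `f` keeps entries in `𝔪`.
-/

open Submodule Function

namespace Submodule

variable {R M N : Type*} [CommRing R] [AddCommGroup M] [Module R M] [AddCommGroup N] [Module R N]

theorem mem_ideal_span_singleton_smul_top {f : R} {x : M} :
    x ∈ (Ideal.span {f} • ⊤ : Submodule R M) ↔ ∃ y, f • y = x := by
  simp [ideal_span_singleton_smul, mem_smul_pointwise_iff_exists]

theorem range_mapQ_le_smul_top {φ : M →ₗ[R] N} {p : Submodule R M} {q : Submodule R N}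
    (hφ : p ≤ comap φ q) {I : Ideal R} (h : LinearMap.range φ ≤ I • ⊤) :
    LinearMap.range (mapQ p q φ hφ) ≤ I • ⊤ :=
  calc LinearMap.range (mapQ p q φ hφ) = (LinearMap.range φ).map q.mkQ := range_mapQ _ _ _ _
    _ ≤ (I • ⊤ : Submodule R N).map q.mkQ := map_mono h
    _ = I • ⊤ := by rw [map_smul'', map_top, range_mkQ]

theorem exact_mapQ_factor {φ : M →ₗ[R] N} {p : Submodule R M} {q : Submodule R N}
    (hφ : p ≤ comap φ q) (hq : q ≤ LinearMap.range φ) :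
    Exact (mapQ p q φ hφ) (factor hq) := by
  intro y
  obtain ⟨x, rfl⟩ := Quotient.mk_surjective q y
  rw [mapQ_apply, LinearMap.id_apply, Quotient.mk_eq_zero]
  constructor
  · rintro ⟨z, rfl⟩
    exact ⟨Quotient.mk z, rfl⟩
  · rintro ⟨z, hz⟩
    obtain ⟨w, rfl⟩ := Quotient.mk_surjective p z
    rw [mapQ_apply, Quotient.eq] at hz
    simpa using sub_mem (LinearMap.mem_range_self φ w) (hq hz)

end Submodule

section MatrixFactorization

variable {R M N : Type*} [CommRing R] [AddCommGroup M] [Module R M] [AddCommGroup N] [Module R N]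
  {f : R} {φ : M →ₗ[R] N} {ψ : N →ₗ[R] M}

theorem smul_top_le_range_of_comp_eq_smul (hφψ : φ ∘ₗ ψ = f • LinearMap.id) :
    (Ideal.span {f} • ⊤ : Submodule R N) ≤ LinearMap.range φ := by
  intro x hx
  obtain ⟨y, rfl⟩ := mem_ideal_span_singleton_smul_top.mp hx
  exact ⟨ψ y, by simpa using LinearMap.congr_fun hφψ y⟩

theorem exact_mapQ_of_comp_eq_smul (hψφ : ψ ∘ₗ φ = f • LinearMap.id)
    (hφψ : φ ∘ₗ ψ = f • LinearMap.id) (hf : IsSMulRegular M f) :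
    Exact (mapQ _ _ ψ (smul_top_le_comap_smul_top (Ideal.span {f}) ψ))
      (mapQ _ _ φ (smul_top_le_comap_smul_top (Ideal.span {f}) φ)) := by
  have hψφ' (x : M) : ψ (φ x) = f • x := by simpa using LinearMap.congr_fun hψφ x
  have hφψ' (y : N) : φ (ψ y) = f • y := by simpa using LinearMap.congr_fun hφψ y
  intro y
  obtain ⟨x, rfl⟩ := Submodule.Quotient.mk_surjective _ y
  rw [mapQ_apply, Submodule.Quotient.mk_eq_zero, mem_ideal_span_singleton_smul_top]
  constructor
  · rintro ⟨z, hz⟩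
    refine ⟨Submodule.Quotient.mk z, ?_⟩
    rw [mapQ_apply, hf (by rw [← map_smul, hz, hψφ'] : f • ψ z = f • x)]
  · rintro ⟨z, hz⟩
    obtain ⟨w, rfl⟩ := Submodule.Quotient.mk_surjective _ z
    rw [mapQ_apply, Submodule.Quotient.eq, mem_ideal_span_singleton_smul_top] at hz
    obtain ⟨u, hu⟩ := hz
    refine ⟨w - φ u, ?_⟩
    rw [smul_sub, ← map_smul, hu, map_sub, hφψ', sub_sub_cancel]

end MatrixFactorization

open MvPolynomial

theorem reduced_matrixFactorization_minimal_free_resolution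
    (k : Type*) [Field k] (n : ℕ)
    (f : MvPolynomial (Fin (n + 1)) k)
    (hf0 : f ≠ 0)
    (F0 F1 : Type*)
    [AddCommGroup F0] [Module (MvPolynomial (Fin (n + 1)) k) F0]
    [Module.Free (MvPolynomial (Fin (n + 1)) k) F0]
    [AddCommGroup F1] [Module (MvPolynomial (Fin (n + 1)) k) F1]
    [Module.Free (MvPolynomial (Fin (n + 1)) k) F1]
    (s0 : F0 →ₗ[MvPolynomial (Fin (n + 1)) k] F1)
    (s1 : F1 →ₗ[MvPolynomial (Fin (n + 1)) k] F0)
    (h10 : s1 ∘ₗ s0 = f • (LinearMap.id : F0 →ₗ[MvPolynomial (Fin (n + 1)) k] F0))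
    (h01 : s0 ∘ₗ s1 = f • (LinearMap.id : F1 →ₗ[MvPolynomial (Fin (n + 1)) k] F1))
    -- reducedness: entries of `s⁰`, `s¹` lie in the irrelevant maximal ideal `𝔪`
    (hred0 : LinearMap.range s0 ≤
      (Ideal.span (Set.range (X : Fin (n + 1) → MvPolynomial (Fin (n + 1)) k))) •
        (⊤ : Submodule (MvPolynomial (Fin (n + 1)) k) F1))
    (hred1 : LinearMap.range s1 ≤
      (Ideal.span (Set.range (X : Fin (n + 1) → MvPolynomial (Fin (n + 1)) k))) •
        (⊤ : Submodule (MvPolynomial (Fin (n + 1)) k) F0)) :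
    let S := MvPolynomial (Fin (n + 1)) k
    let 𝔪 : Ideal S := Ideal.span (Set.range X)
    let I : Ideal S := Ideal.span {f}
    let T0 : Submodule S F0 := I • ⊤
    let T1 : Submodule S F1 := I • ⊤
    let s0bar : (F0 ⧸ T0) →ₗ[S] (F1 ⧸ T1) := Submodule.mapQ T0 T1 s0
      (by rw [← Submodule.map_le_iff_le_comap, Submodule.map_smul'']
          exact Submodule.smul_mono le_rfl le_top)
    let s1bar : (F1 ⧸ T1) →ₗ[S] (F0 ⧸ T0) := Submodule.mapQ T1 T0 s1
      (by rw [← Submodule.map_le_iff_le_comap, Submodule.map_smul'']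
          exact Submodule.smul_mono le_rfl le_top)
    let π : (F1 ⧸ T1) →ₗ[S] (F1 ⧸ LinearMap.range s0) :=
      Submodule.mapQ T1 (LinearMap.range s0) LinearMap.id
      (by rw [← Submodule.map_le_iff_le_comap, Submodule.map_id]
          refine Submodule.smul_le.2 fun r hr m _ => ?_
          obtain ⟨c, rfl⟩ := Ideal.mem_span_singleton'.mp hr
          refine ⟨c • s1 m, ?_⟩
          have hm := congrFun (congrArg DFunLike.coe h01) m
          simp only [LinearMap.comp_apply, LinearMap.smul_apply, LinearMap.id_apply] at hm
          rw [map_smul, hm, mul_smul])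
    -- exactness of `⋯ → F⁰⊗R → F¹⊗R → F⁰⊗R → F¹⊗R → M → 0`
    (Function.Exact s0bar π ∧ Function.Surjective π ∧
      Function.Exact s1bar s0bar ∧ Function.Exact s0bar s1bar) ∧
    -- minimality of the resolution
    (LinearMap.range s0bar ≤ 𝔪 • (⊤ : Submodule S (F1 ⧸ T1)) ∧
      LinearMap.range s1bar ≤ 𝔪 • (⊤ : Submodule S (F0 ⧸ T0))) := by
  intro S 𝔪 I T0 T1 s0bar s1bar π
  have hT1 : T1 ≤ LinearMap.range s0 := smul_top_le_range_of_comp_eq_smul h01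
  exact ⟨⟨exact_mapQ_factor _ hT1, factor_surjective hT1,
      exact_mapQ_of_comp_eq_smul h10 h01 (smul_right_injective F0 hf0),
      exact_mapQ_of_comp_eq_smul h01 h10 (smul_right_injective F1 hf0)⟩,
    range_mapQ_le_smul_top _ hred0, range_mapQ_le_smul_top _ hred1⟩
end

section
/- Let Q be a commutative ring, f ∈ Q a nonzerodivisor, and (F^0, F^1, s^0, s^1) a matrix factorization of f. Then over R = Q/(f), the induced sequence F^0 ⊗ R → F^1 ⊗ R → coker(s^0) → 0 is exact and ker(s̄^0) = im(s̄^1), where s̄^i denote the reductions mod f; i.e., the 2-periodic complex ⋯ → F^1⊗R → F^0⊗R → F^1⊗R is exact. -/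
/-! The one real input is `s⁰⁻¹(fF¹) = im s¹`: if `s⁰ x = f z` then
`f x = s¹ s⁰ x = f s¹ z`, and `f` is a nonzerodivisor on the free module `F⁰`, so
`x = s¹ z`. Passing to the quotient by `fF⁰` turns this into `ker s̄⁰ = im s̄¹`, and
symmetrically. Since `fF¹ = im (s⁰ s¹) ⊆ im s⁰`, the map `F¹/fF¹ → coker s⁰` is a further
quotient, whose kernel is the image of `s̄⁰`. -/

open Submodule

theorem Submodule.mem_span_singleton_smul_top_iff {R M : Type*} [CommRing R] [AddCommGroup M]
    [Module R M] {f : R} {x : M} :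
    x ∈ (Ideal.span {f} • ⊤ : Submodule R M) ↔ ∃ y, f • y = x := by
  simp [ideal_span_singleton_smul, mem_smul_pointwise_iff_exists]

namespace LinearMap

variable {R M N : Type*} [CommRing R] [AddCommGroup M] [Module R M]
  [AddCommGroup N] [Module R N] {f : R} {s : M →ₗ[R] N} {t : N →ₗ[R] M}

theorem comp_apply_eq_smul (hst : s ∘ₗ t = f • LinearMap.id) (y : N) : s (t y) = f • y :=
  LinearMap.congr_fun hst y

theorem span_singleton_smul_top_le_range (hst : s ∘ₗ t = f • LinearMap.id) :
    (Ideal.span {f} • ⊤ : Submodule R N) ≤ range s := by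
  intro x hx
  obtain ⟨y, rfl⟩ := mem_span_singleton_smul_top_iff.mp hx
  exact ⟨t y, comp_apply_eq_smul hst y⟩

theorem comap_span_singleton_smul_top_eq_range (hreg : IsSMulRegular M f)
    (hts : t ∘ₗ s = f • LinearMap.id) (hst : s ∘ₗ t = f • LinearMap.id) :
    (Ideal.span {f} • ⊤ : Submodule R N).comap s = range t := by
  ext x
  simp only [mem_comap, mem_span_singleton_smul_top_iff, mem_range]
  constructor
  · rintro ⟨z, hz⟩
    refine ⟨z, hreg (?_ : f • t z = f • x)⟩
    rw [← map_smul, hz, comp_apply_eq_smul hts]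
  · rintro ⟨z, rfl⟩
    exact ⟨z, (comp_apply_eq_smul hst z).symm⟩

theorem exact_mapQ_span_singleton_smul_top (hreg : IsSMulRegular M f)
    (hts : t ∘ₗ s = f • LinearMap.id) (hst : s ∘ₗ t = f • LinearMap.id) (ht hs) :
    Function.Exact (mapQ (Ideal.span {f} • ⊤) (Ideal.span {f} • ⊤) t ht)
      (mapQ (Ideal.span {f} • ⊤) (Ideal.span {f} • ⊤) s hs) := by
  rw [exact_iff, ker_mapQ, range_mapQ, comap_span_singleton_smul_top_eq_range hreg hts hst]

theorem exact_mapQ_factor_range {p : Submodule R M} {q : Submodule R N} (g : M →ₗ[R] N)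
    (hpq : p ≤ q.comap g) (hq : q ≤ range g) :
    Function.Exact (mapQ p q g hpq) (factor hq) := by
  rw [exact_iff, ker_mapQ, range_mapQ, comap_id]

end LinearMap

/-- Let `Q` be a commutative ring, `f` a nonzerodivisor, `R = Q/(f)`, and
`(F⁰, F¹, s⁰, s¹)` a matrix factorization of `f`.  Identifying `Fⁱ ⊗ R` with
`Fⁱ/fFⁱ`, the induced sequence `F⁰⊗R → F¹⊗R → coker s⁰ → 0` is exact, and
`ker s̄⁰ = im s̄¹` and `ker s̄¹ = im s̄⁰`; i.e. the 2-periodic complex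
`⋯ → F¹⊗R → F⁰⊗R → F¹⊗R → ⋯` is exact. -/
theorem matrixFactorization_two_periodic_exact
    (Q : Type*) [CommRing Q] (f : Q) (hf : f ∈ nonZeroDivisors Q)
    (F0 F1 : Type*)
    [AddCommGroup F0] [Module Q F0] [Module.Free Q F0]
    [AddCommGroup F1] [Module Q F1] [Module.Free Q F1]
    (s0 : F0 →ₗ[Q] F1) (s1 : F1 →ₗ[Q] F0)
    (h10 : s1 ∘ₗ s0 = f • (LinearMap.id : F0 →ₗ[Q] F0))
    (h01 : s0 ∘ₗ s1 = f • (LinearMap.id : F1 →ₗ[Q] F1)) :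
    let I : Ideal Q := Ideal.span {f}
    let T0 : Submodule Q F0 := I • ⊤
    let T1 : Submodule Q F1 := I • ⊤
    -- the reduction `s̄⁰ : F⁰ ⊗ R = F⁰/fF⁰ → F¹/fF¹ = F¹ ⊗ R`
    let s0bar : (F0 ⧸ T0) →ₗ[Q] (F1 ⧸ T1) := Submodule.mapQ T0 T1 s0
      (by rw [← Submodule.map_le_iff_le_comap, Submodule.map_smul'']
          exact Submodule.smul_mono le_rfl le_top)
    -- the reduction `s̄¹ : F¹ ⊗ R → F⁰ ⊗ R`
    let s1bar : (F1 ⧸ T1) →ₗ[Q] (F0 ⧸ T0) := Submodule.mapQ T1 T0 s1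
      (by rw [← Submodule.map_le_iff_le_comap, Submodule.map_smul'']
          exact Submodule.smul_mono le_rfl le_top)
    -- the canonical map `F¹ ⊗ R → coker s⁰`
    let π : (F1 ⧸ T1) →ₗ[Q] (F1 ⧸ LinearMap.range s0) :=
      Submodule.mapQ T1 (LinearMap.range s0) LinearMap.id
      (by rw [← Submodule.map_le_iff_le_comap, Submodule.map_id]
          refine Submodule.smul_le.2 fun r hr m _ => ?_
          obtain ⟨c, rfl⟩ := Ideal.mem_span_singleton'.mp hr
          refine ⟨c • s1 m, ?_⟩
          have hm := congrFun (congrArg DFunLike.coe h01) m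
          simp only [LinearMap.comp_apply, LinearMap.smul_apply, LinearMap.id_apply] at hm
          rw [map_smul, hm, mul_smul])
    Function.Exact s0bar π ∧ Function.Surjective π ∧
      Function.Exact s1bar s0bar ∧ Function.Exact s0bar s1bar := by
  intro I T0 T1 s0bar s1bar π
  have hT1 : T1 ≤ LinearMap.range s0 := LinearMap.span_singleton_smul_top_le_range h01
  exact ⟨LinearMap.exact_mapQ_factor_range s0 _ hT1, factor_surjective hT1,
    LinearMap.exact_mapQ_span_singleton_smul_top (Module.Flat.isSMulRegular_of_nonZeroDivisors hf)
      h10 h01 _ _,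
    LinearMap.exact_mapQ_span_singleton_smul_top (Module.Flat.isSMulRegular_of_nonZeroDivisors hf)
      h01 h10 _ _⟩
end
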